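/- arXiv:2109.04675 — 4 statements merged into one kernel-verified Lean document; each statement's English description precedes it below -/
import Mathlib

section
/- For every real number λ and every complex number z with Im z ≥ 0, there exist a real number λ₁ and a complex number z₁ such that z₁ ∈ Θ(λ) ∩ Θ(λ₁), z ∈ Θ(λ₁), and each of the three distances |z₁ − λ|, |z₁ − λ₁| and |z − λ₁| is at most |z − λ|. (In other words, any segment from a real point λ to a point z of the closed upper half-plane, however steep or shallow, can be replaced by three segments, each of slope within the cone aperture [π/4, 3π/4] and of length not exceeding |z − λ|.) -/
/-- For `λ : ℝ`, the cone `Θ(λ)` is `{z : ℂ | |Re z − λ| ≤ Im z}`. -/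
def coneTheta (l : ℝ) : Set ℂ := {z : ℂ | |z.re - l| ≤ z.im}

lemma abs_le_abs_of_normSq (w v : ℂ) (h : Complex.normSq w ≤ Complex.normSq v) :
    ‖w‖ ≤ ‖v‖ := by
  rw [Complex.norm_def, Complex.norm_def]
  exact Real.sqrt_le_sqrt h

/-- Any segment from a real point `λ` to a point `z` of the closed upper half-plane can be
replaced by three segments with slopes inside the cone aperture, each of length at most
`|z − λ|`. -/
theorem segment_three_cone_steps (l : ℝ) (z : ℂ) (hz : 0 ≤ z.im) :
    ∃ (l₁ : ℝ) (z₁ : ℂ),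
      z₁ ∈ coneTheta l ∩ coneTheta l₁ ∧ z ∈ coneTheta l₁ ∧
      ‖z₁ - (l : ℂ)‖ ≤ ‖z - (l : ℂ)‖ ∧
      ‖z₁ - (l₁ : ℂ)‖ ≤ ‖z - (l : ℂ)‖ ∧
      ‖z - (l₁ : ℂ)‖ ≤ ‖z - (l : ℂ)‖ := by
  refine ⟨z.re, ⟨(l + z.re) / 2, |z.re - l| / 2⟩, ⟨?_, ?_⟩, ?_, ?_, ?_, ?_⟩
  · show |(l + z.re) / 2 - l| ≤ |z.re - l| / 2
    rw [abs_le]; constructor <;> [nlinarith [abs_nonneg (z.re - l), neg_abs_le (z.re - l)];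
      nlinarith [le_abs_self (z.re - l)]]
  · show |(l + z.re) / 2 - z.re| ≤ |z.re - l| / 2
    rw [abs_le]; constructor <;> [nlinarith [le_abs_self (z.re - l)];
      nlinarith [neg_abs_le (z.re - l)]]
  · show |z.re - z.re| ≤ z.im
    simpa using hz
  all_goals
    apply abs_le_abs_of_normSq
    simp only [Complex.normSq_apply, Complex.sub_re, Complex.sub_im, Complex.ofReal_re,
      Complex.ofReal_im]
    nlinarith [sq_abs (z.re - l), sq_nonneg z.im, sq_nonneg (z.re - l), hz]
end

section
/- Let E be a complete normed space (Banach space) and let f be an E-valued function defined and continuous on the open upper half-plane ℂ₊ = {z ∈ ℂ : Im z > 0}. Let Λ be the set of real numbers λ such that f(z) converges in E as z → λ with z ∈ Θ(λ) ∩ ℂ₊. Then Λ is a Borel measurable subset of ℝ, and the boundary-value function f̃ : Λ → E, f̃(λ) := lim_{z→λ, z∈Θ(λ)∩ℂ₊} f(z), is a Borel measurable function on Λ. -/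
open MeasureTheory

/-- `f(z) → v` as `z → λ` within `Θ(λ) ∩ ℂ₊`:
for every `ε > 0` there is `r > 0` such that `‖f z − v‖ < ε` whenever
`z ∈ Θ(λ) ∩ ℂ₊` and `|z − λ| < r`. -/
def ConeLimit {E : Type*} [NormedAddCommGroup E] (f : ℂ → E) (l : ℝ) (v : E) : Prop :=
  ∀ ε > 0, ∃ r > 0, ∀ z : ℂ, |z.re - l| ≤ z.im → 0 < z.im →
    ‖z - (l : ℂ)‖ < r → ‖f z - v‖ < ε

namespace ConeAux

/-- The vertical approach sequence `λ + i/(k+1)`. -/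
noncomputable def seq (l : ℝ) (k : ℕ) : ℂ := (l : ℂ) + ((1 / (k + 1 : ℝ) : ℝ) : ℂ) * Complex.I

lemma seq_re (l : ℝ) (k : ℕ) : (seq l k).re = l := by
  simp [seq, Complex.add_re, Complex.mul_I_re]

lemma seq_im (l : ℝ) (k : ℕ) : (seq l k).im = 1 / (k + 1 : ℝ) := by
  rw [seq, Complex.add_im, Complex.mul_I_im, Complex.ofReal_im, Complex.ofReal_re, zero_add]

lemma seq_abs (l : ℝ) (k : ℕ) : ‖seq l k - (l : ℂ)‖ = 1 / (k + 1 : ℝ) := by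
  rw [seq, add_sub_cancel_left, norm_mul, Complex.norm_I, Complex.norm_real, mul_one,
    Real.norm_eq_abs, abs_of_nonneg (by positivity)]

lemma one_div_succ_le {k N : ℕ} (h : N ≤ k) : 1 / (k + 1 : ℝ) ≤ 1 / (N + 1 : ℝ) :=
  one_div_le_one_div_of_le (by positivity) (by exact_mod_cast Nat.succ_le_succ h)

/-- The closed "uniform Cauchy oscillation" sets. -/
def CSet {E : Type*} [NormedAddCommGroup E] (f : ℂ → E) (n m : ℕ) : Set ℝ :=
  {l | ∀ z w : ℂ, |z.re - l| < z.im → ‖z - (l : ℂ)‖ < 1 / (m + 1 : ℝ) →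
    |w.re - l| < w.im → ‖w - (l : ℂ)‖ < 1 / (m + 1 : ℝ) →
    ‖f z - f w‖ ≤ 1 / (n + 1 : ℝ)}

lemma isClosed_CSet {E : Type*} [NormedAddCommGroup E] (f : ℂ → E) (n m : ℕ) :
    IsClosed (CSet f n m) := by
  have heq : CSet f n m = ⋂ (z : ℂ), ⋂ (w : ℂ),
      {l : ℝ | (|z.re - l| < z.im ∧ ‖z - (l : ℂ)‖ < 1 / (m + 1 : ℝ) ∧
        |w.re - l| < w.im ∧ ‖w - (l : ℂ)‖ < 1 / (m + 1 : ℝ)) →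
        ‖f z - f w‖ ≤ 1 / (n + 1 : ℝ)} := by
    ext l
    simp only [CSet, Set.mem_setOf_eq, Set.mem_iInter]
    constructor
    · intro h z w ⟨h1, h2, h3, h4⟩; exact h z w h1 h2 h3 h4
    · intro h z w h1 h2 h3 h4; exact h z w ⟨h1, h2, h3, h4⟩
  rw [heq]
  refine isClosed_iInter fun z => isClosed_iInter fun w => ?_
  by_cases hq : ‖f z - f w‖ ≤ 1 / (n + 1 : ℝ)
  · have : {l : ℝ | (|z.re - l| < z.im ∧ ‖z - (l : ℂ)‖ < 1 / (m + 1 : ℝ) ∧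
        |w.re - l| < w.im ∧ ‖w - (l : ℂ)‖ < 1 / (m + 1 : ℝ)) →
        ‖f z - f w‖ ≤ 1 / (n + 1 : ℝ)} = Set.univ := by
      ext l
      simp only [Set.mem_setOf_eq, Set.mem_univ, iff_true]
      exact fun _ => hq
    rw [this]; exact isClosed_univ
  · have h1 : Continuous fun l : ℝ => |z.re - l| := (continuous_const.sub continuous_id).abs
    have h1' : Continuous fun l : ℝ => |w.re - l| := (continuous_const.sub continuous_id).abs
    have h2 : Continuous fun l : ℝ => ‖z - (l : ℂ)‖ :=
      continuous_norm.comp (continuous_const.sub Complex.continuous_ofReal)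
    have h2' : Continuous fun l : ℝ => ‖w - (l : ℂ)‖ :=
      continuous_norm.comp (continuous_const.sub Complex.continuous_ofReal)
    have hopen : IsOpen {l : ℝ | |z.re - l| < z.im ∧
        ‖z - (l : ℂ)‖ < 1 / (m + 1 : ℝ) ∧ |w.re - l| < w.im ∧
        ‖w - (l : ℂ)‖ < 1 / (m + 1 : ℝ)} :=
      ((isOpen_lt h1 continuous_const).inter ((isOpen_lt h2 continuous_const).inter
        ((isOpen_lt h1' continuous_const).inter (isOpen_lt h2' continuous_const))))
    have : {l : ℝ | (|z.re - l| < z.im ∧ ‖z - (l : ℂ)‖ < 1 / (m + 1 : ℝ) ∧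
        |w.re - l| < w.im ∧ ‖w - (l : ℂ)‖ < 1 / (m + 1 : ℝ)) →
        ‖f z - f w‖ ≤ 1 / (n + 1 : ℝ)} = {l : ℝ | |z.re - l| < z.im ∧
        ‖z - (l : ℂ)‖ < 1 / (m + 1 : ℝ) ∧ |w.re - l| < w.im ∧
        ‖w - (l : ℂ)‖ < 1 / (m + 1 : ℝ)}ᶜ := by
      ext l
      constructor
      · intro himp hc; exact hq (himp hc)
      · intro hnc hc; exact (hnc hc).elim
    rw [this]; exact hopen.isClosed_compl

/-- Along the vertical sequence the cone limit is realised. -/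
lemma tendsto_seq {E : Type*} [NormedAddCommGroup E] {f : ℂ → E} {l : ℝ} {v : E}
    (h : ConeLimit f l v) : Filter.Tendsto (fun k : ℕ => f (seq l k)) Filter.atTop (nhds v) := by
  rw [Metric.tendsto_atTop]
  intro ε hε
  obtain ⟨r, hr, hball⟩ := h ε hε
  obtain ⟨N, hN⟩ := exists_nat_one_div_lt hr
  refine ⟨N, fun k hk => ?_⟩
  have him : (seq l k).im = 1 / (k + 1 : ℝ) := seq_im l k
  rw [dist_eq_norm]
  refine hball _ ?_ ?_ ?_
  · rw [seq_re, him, sub_self, abs_zero]; positivity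
  · rw [him]; positivity
  · rw [seq_abs]
    calc 1 / (k + 1 : ℝ) ≤ 1 / (N + 1 : ℝ) := one_div_succ_le hk
      _ < r := by exact_mod_cast hN

/-- The key characterisation: the cone-limit set equals `⋂ n, ⋃ m, CSet f n m`. -/
lemma lambda_eq {E : Type*} [NormedAddCommGroup E] [NormedSpace ℝ E] [CompleteSpace E]
    (f : ℂ → E) (hf : ContinuousOn f {z : ℂ | 0 < z.im}) :
    {l : ℝ | ∃ v : E, ConeLimit f l v} = ⋂ n : ℕ, ⋃ m : ℕ, CSet f n m := by
  ext l
  simp only [Set.mem_setOf_eq, Set.mem_iInter, Set.mem_iUnion]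
  constructor
  · rintro ⟨v, hv⟩ n
    obtain ⟨r, hr, hball⟩ := hv (1 / (n + 1 : ℝ) / 2) (by positivity)
    obtain ⟨m, hm⟩ := exists_nat_one_div_lt hr
    refine ⟨m, fun z w h1 h2 h3 h4 => ?_⟩
    have hm' : 1 / (m + 1 : ℝ) < r := by exact_mod_cast hm
    have hz : ‖f z - v‖ < 1 / (n + 1 : ℝ) / 2 :=
      hball z h1.le (lt_of_le_of_lt (abs_nonneg _) h1) (h2.trans hm')
    have hw : ‖f w - v‖ < 1 / (n + 1 : ℝ) / 2 :=
      hball w h3.le (lt_of_le_of_lt (abs_nonneg _) h3) (h4.trans hm')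
    have : f z - f w = (f z - v) - (f w - v) := by abel
    rw [this]
    calc ‖(f z - v) - (f w - v)‖ ≤ ‖f z - v‖ + ‖f w - v‖ := norm_sub_le _ _
      _ ≤ 1 / (n + 1 : ℝ) := by linarith
  · intro h
    -- the vertical sequence is Cauchy
    have hcauchy : CauchySeq (fun k : ℕ => f (seq l k)) := by
      rw [Metric.cauchySeq_iff]
      intro ε hε
      obtain ⟨n, hn⟩ := exists_nat_one_div_lt hε
      obtain ⟨m, hm⟩ := h n
      refine ⟨m + 1, fun k hk j hj => ?_⟩
      have hcond : ∀ i : ℕ, m + 1 ≤ i → |(seq l i).re - l| < (seq l i).im ∧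
          ‖seq l i - (l : ℂ)‖ < 1 / (m + 1 : ℝ) := by
        intro i hi
        have hlt : 1 / (i + 1 : ℝ) < 1 / (m + 1 : ℝ) := by
          apply one_div_lt_one_div_of_lt (by positivity)
          have : (m : ℝ) + 1 < i + 1 := by exact_mod_cast Nat.lt_succ_of_le hi
          linarith
        constructor
        · rw [seq_re, seq_im, sub_self, abs_zero]; positivity
        · rw [seq_abs]; exact hlt
      obtain ⟨hk1, hk2⟩ := hcond k hk
      obtain ⟨hj1, hj2⟩ := hcond j hj
      rw [dist_eq_norm]
      calc ‖f (seq l k) - f (seq l j)‖ ≤ 1 / (n + 1 : ℝ) := hm _ _ hk1 hk2 hj1 hj2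
        _ < ε := by exact_mod_cast hn
    obtain ⟨v, hv⟩ := cauchySeq_tendsto_of_complete hcauchy
    refine ⟨v, ?_⟩
    intro ε hε
    obtain ⟨n, hn⟩ := exists_nat_one_div_lt (show (0:ℝ) < ε / 3 by linarith)
    obtain ⟨m, hm⟩ := h n
    refine ⟨1 / (m + 1 : ℝ), by positivity, ?_⟩
    intro z hre him habs
    -- continuity of f at z
    have hzmem : z ∈ {z : ℂ | 0 < z.im} := him
    have hfz : ContinuousAt f z :=
      hf.continuousAt ((isOpen_lt continuous_const Complex.continuous_im).mem_nhds hzmem)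
    obtain ⟨δ, hδ, hδball⟩ := Metric.continuousAt_iff.1 hfz (ε / 3) (by linarith)
    -- pick a point w slightly above z, strictly inside the cone
    set t : ℝ := min δ (1 / (m + 1 : ℝ) - ‖z - (l : ℂ)‖) / 2 with ht
    have ht0 : 0 < t := by
      apply div_pos _ (by norm_num)
      exact lt_min hδ (by linarith)
    set w : ℂ := z + (t : ℂ) * Complex.I with hw
    have hwre : w.re = z.re := by simp [hw, Complex.add_re, Complex.mul_I_re]
    have hwim : w.im = z.im + t := by simp [hw, Complex.add_im, Complex.mul_I_im]
    have htI : ‖(t : ℂ) * Complex.I‖ = t := by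
      rw [norm_mul, Complex.norm_I, Complex.norm_real, mul_one, Real.norm_eq_abs, abs_of_pos ht0]
    have hmin : 0 < min δ (1 / (m + 1 : ℝ) - ‖z - (l : ℂ)‖) :=
      lt_min hδ (by linarith)
    have hdistwz : dist w z < δ := by
      rw [Complex.dist_eq, hw, add_sub_cancel_left, htI]
      calc t < min δ (1 / (m + 1 : ℝ) - ‖z - (l : ℂ)‖) := by
            rw [ht]; linarith
        _ ≤ δ := min_le_left _ _
    have hw1 : |w.re - l| < w.im := by
      rw [hwre, hwim]; exact lt_of_le_of_lt hre (by linarith)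
    have hw2 : ‖w - (l : ℂ)‖ < 1 / (m + 1 : ℝ) := by
      have : w - (l : ℂ) = (z - (l : ℂ)) + (t : ℂ) * Complex.I := by rw [hw]; ring
      rw [this]
      calc ‖(z - (l : ℂ)) + (t : ℂ) * Complex.I‖
          ≤ ‖z - (l : ℂ)‖ + ‖(t : ℂ) * Complex.I‖ :=
            norm_add_le _ _
        _ = ‖z - (l : ℂ)‖ + t := by rw [htI]
        _ < 1 / (m + 1 : ℝ) := by
            have : t ≤ (1 / (m + 1 : ℝ) - ‖z - (l : ℂ)‖) / 2 := by
              rw [ht]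
              apply div_le_div_of_nonneg_right (min_le_right _ _) (by norm_num)
            linarith [ht0]
    -- pick k far along the vertical sequence
    rw [Metric.tendsto_atTop] at hv
    obtain ⟨N1, hN1⟩ := hv (ε / 3) (by linarith)
    set k : ℕ := max N1 (m + 1) with hk
    have hk1 : |(seq l k).re - l| < (seq l k).im := by
      rw [seq_re, seq_im, sub_self, abs_zero]; positivity
    have hk2 : ‖seq l k - (l : ℂ)‖ < 1 / (m + 1 : ℝ) := by
      rw [seq_abs]
      apply one_div_lt_one_div_of_lt (by positivity)
      have : (m : ℝ) + 1 < k + 1 := by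
        have : m + 1 ≤ k := le_max_right _ _
        exact_mod_cast Nat.lt_succ_of_le this
      linarith
    have hvk : dist (f (seq l k)) v < ε / 3 := hN1 k (le_max_left _ _)
    -- assemble
    have hfw : dist (f w) (f z) < ε / 3 := hδball hdistwz
    have hmid : ‖f w - f (seq l k)‖ ≤ 1 / (n + 1 : ℝ) := hm _ _ hw1 hw2 hk1 hk2
    have htri : dist (f z) v ≤ dist (f z) (f w) + dist (f w) (f (seq l k)) +
        dist (f (seq l k)) v := dist_triangle4 _ _ _ _
    rw [dist_comm] at hfw
    rw [← dist_eq_norm]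
    rw [dist_eq_norm] at htri
    calc dist (f z) v ≤ dist (f z) (f w) + dist (f w) (f (seq l k)) + dist (f (seq l k)) v :=
          dist_triangle4 _ _ _ _
      _ < ε / 3 + (1 / (n + 1 : ℝ)) + ε / 3 := by
          rw [dist_eq_norm (f w)]
          apply add_lt_add_of_lt_of_lt (add_lt_add_of_lt_of_le hfw hmid) hvk
      _ < ε := by linarith

end ConeAux

/-- The set `Λ` of real points where the cone boundary limit of `f` exists is Borel
measurable, and the boundary-value function (any function `g` that realises the cone
limits on `Λ`, restricted to `Λ`) is Borel measurable. -/
theorem coneLimit_set_measurable_and_boundary_function_measurable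
    {E : Type*} [NormedAddCommGroup E] [NormedSpace ℝ E] [CompleteSpace E]
    [MeasurableSpace E] [BorelSpace E]
    (f : ℂ → E) (hf : ContinuousOn f {z : ℂ | 0 < z.im}) :
    MeasurableSet {l : ℝ | ∃ v : E, ConeLimit f l v} ∧
      ∀ g : ℝ → E, (∀ l ∈ {l : ℝ | ∃ v : E, ConeLimit f l v}, ConeLimit f l (g l)) →
        Measurable (fun l : {l : ℝ | ∃ v : E, ConeLimit f l v} => g l) := by
  constructor
  · rw [ConeAux.lambda_eq f hf]
    exact MeasurableSet.iInter fun n => MeasurableSet.iUnion fun m =>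
      (ConeAux.isClosed_CSet f n m).measurableSet
  · intro g hg
    have hmeas : ∀ k : ℕ, Measurable
        (fun x : {l : ℝ | ∃ v : E, ConeLimit f l v} => f (ConeAux.seq (x : ℝ) k)) := by
      intro k
      have hc : Continuous fun l : ℝ => f (ConeAux.seq l k) := by
        apply hf.comp_continuous
        · exact Complex.continuous_ofReal.add continuous_const
        · intro l
          show 0 < (ConeAux.seq l k).im
          rw [ConeAux.seq_im]; positivity
      exact hc.measurable.comp measurable_subtype_coe
    refine measurable_of_tendsto_metrizable hmeas (tendsto_pi_nhds.2 fun x => ?_)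
    exact ConeAux.tendsto_seq (hg x x.2)
end

section
/- (Cone-limit Egorov theorem, uniform version.) Let E be a complete normed space and let f be an E-valued function defined and continuous on the open upper half-plane ℂ₊. Let Λ be the set of real numbers λ such that the limit f̃(λ) := lim f(z) as z → λ with z ∈ Θ(λ) ∩ ℂ₊ exists in E. Let I be a bounded open interval of ℝ such that I \ Λ has Lebesgue measure zero. Then for every δ > 0 there exists a compact set K ⊆ I ∩ Λ with Lebesgue measure of I \ K less than δ, such that the convergence is uniform over K in the following sense: for every ε > 0 there exists r > 0 such that for all λ ∈ K and all z ∈ Θ(λ) ∩ ℂ₊ with |z − λ| < r one has ‖f(z) − f̃(λ)‖ < ε. -/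
open MeasureTheory Filter Topology

section Aux
variable {E : Type*} [NormedAddCommGroup E]

/-- The set of `l` such that `f` oscillates by at most `ε` on the cone at `l` within radius `r`. -/
def coneSet (f : ℂ → E) (ε r : ℝ) : Set ℝ :=
  {l | ∀ z w : ℂ, |z.re - l| ≤ z.im → 0 < z.im → ‖z - (l : ℂ)‖ ≤ r →
    |w.re - l| ≤ w.im → 0 < w.im → ‖w - (l : ℂ)‖ ≤ r → ‖f z - f w‖ ≤ ε}

lemma coneSet_mono {f : ℂ → E} {ε r r' : ℝ} (h : r' ≤ r) :
    coneSet f ε r ⊆ coneSet f ε r' := by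
  intro l hl z w hz1 hz2 hz3 hw1 hw2 hw3
  exact hl z w hz1 hz2 (hz3.trans h) hw1 hw2 (hw3.trans h)

lemma coneSet_closed (f : ℂ → E) (hf : ContinuousOn f {z : ℂ | 0 < z.im}) (ε r : ℝ) :
    IsClosed (coneSet f ε r) := by
  have hopen : IsOpen {z : ℂ | 0 < z.im} := isOpen_lt continuous_const Complex.continuous_im
  apply IsSeqClosed.isClosed
  intro x p hx hp
  intro z w hz1 hz2 hz3 hw1 hw2 hw3
  set zk : ℕ → ℂ := fun n => z + ((x n - p : ℝ) : ℂ) with hzk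
  set wk : ℕ → ℂ := fun n => w + ((x n - p : ℝ) : ℂ) with hwk
  have hshift : Tendsto (fun n => ((x n - p : ℝ) : ℂ)) atTop (𝓝 0) := by
    have h1 : Tendsto (fun n => x n - p) atTop (𝓝 (p - p)) := hp.sub tendsto_const_nhds
    rw [sub_self] at h1
    have h2 := (Complex.continuous_ofReal.tendsto 0).comp h1
    rw [Complex.ofReal_zero] at h2
    exact h2
  have hzt : Tendsto zk atTop (𝓝 (z + 0)) := tendsto_const_nhds.add hshift
  rw [add_zero] at hzt
  have hwt : Tendsto wk atTop (𝓝 (w + 0)) := tendsto_const_nhds.add hshift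
  rw [add_zero] at hwt
  have hfz : Tendsto (fun n => f (zk n)) atTop (𝓝 (f z)) :=
    ((hf.continuousAt (hopen.mem_nhds hz2)).tendsto).comp hzt
  have hfw : Tendsto (fun n => f (wk n)) atTop (𝓝 (f w)) :=
    ((hf.continuousAt (hopen.mem_nhds hw2)).tendsto).comp hwt
  have hb : ∀ n, ‖f (zk n) - f (wk n)‖ ≤ ε := by
    intro n
    have hre : ∀ u : ℂ, (u + ((x n - p : ℝ) : ℂ)).re = u.re + (x n - p) := by
      intro u; simp
    have him : ∀ u : ℂ, (u + ((x n - p : ℝ) : ℂ)).im = u.im := by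
      intro u; simp
    have habs : ∀ u : ℂ, u + ((x n - p : ℝ) : ℂ) - ((x n : ℝ) : ℂ) = u - (p : ℂ) := by
      intro u; push_cast; ring
    refine hx n (zk n) (wk n) ?_ ?_ ?_ ?_ ?_ ?_
    · rw [hzk]; simp only [hre, him]
      convert hz1 using 2; ring
    · rw [hzk]; simp only [him]; exact hz2
    · rw [hzk]; simp only; rw [habs]; exact hz3
    · rw [hwk]; simp only [hre, him]
      convert hw1 using 2; ring
    · rw [hwk]; simp only [him]; exact hw2
    · rw [hwk]; simp only; rw [habs]; exact hw3
  exact le_of_tendsto ((hfz.sub hfw).norm) (Eventually.of_forall hb)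

/-- If the cone limit exists at `l`, then `l` belongs to some `coneSet` with small radius. -/
lemma coneSet_of_coneLimit {f : ℂ → E} {l : ℝ} {v : E} (h : ConeLimit f l v)
    {ε : ℝ} (hε : 0 < ε) : ∃ m : ℕ, l ∈ coneSet f ε (1 / (m + 1)) := by
  obtain ⟨r, hr, hr'⟩ := h (ε / 2) (by linarith)
  obtain ⟨m, hm⟩ := exists_nat_one_div_lt hr
  refine ⟨m, fun z w hz1 hz2 hz3 hw1 hw2 hw3 => ?_⟩
  have h1 := hr' z hz1 hz2 (lt_of_le_of_lt hz3 hm)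
  have h2 := hr' w hw1 hw2 (lt_of_le_of_lt hw3 hm)
  calc ‖f z - f w‖ = ‖(f z - v) - (f w - v)‖ := by rw [sub_sub_sub_cancel_right]
    _ ≤ ‖f z - v‖ + ‖f w - v‖ := norm_sub_le _ _
    _ ≤ ε := by linarith

/-- Key bound: if `l ∈ coneSet f ε r` and `f (p n) → v` along points of the cone within
radius `r`, then `‖f z - v‖ ≤ ε` for every cone point `z` within radius `r`. -/
lemma coneSet_norm_le {f : ℂ → E} {l ε r : ℝ} (hl : l ∈ coneSet f ε r)
    {p : ℕ → ℂ} (hp : ∀ᶠ n in atTop, |(p n).re - l| ≤ (p n).im ∧ 0 < (p n).im ∧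
      ‖p n - (l : ℂ)‖ ≤ r)
    {v : E} (hv : Tendsto (fun n => f (p n)) atTop (𝓝 v))
    {z : ℂ} (hz1 : |z.re - l| ≤ z.im) (hz2 : 0 < z.im)
    (hz3 : ‖z - (l : ℂ)‖ ≤ r) : ‖f z - v‖ ≤ ε := by
  refine le_of_tendsto ((tendsto_const_nhds.sub hv).norm) ?_
  exact hp.mono fun n hn => hl z (p n) hz1 hz2 hz3 hn.1 hn.2.1 hn.2.2

end Aux

section Aux2
variable {E : Type*} [NormedAddCommGroup E]

lemma conePoint_facts (l : ℝ) {t : ℝ} (ht : 0 < t) :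
    |((l : ℂ) + (t : ℂ) * Complex.I).re - l| ≤ ((l : ℂ) + (t : ℂ) * Complex.I).im ∧
    0 < ((l : ℂ) + (t : ℂ) * Complex.I).im ∧
    ‖((l : ℂ) + (t : ℂ) * Complex.I) - (l : ℂ)‖ = t := by
  have h1 : ((l : ℂ) + (t : ℂ) * Complex.I).re = l := by simp
  have h2 : ((l : ℂ) + (t : ℂ) * Complex.I).im = t := by simp
  have h3 : ((l : ℂ) + (t : ℂ) * Complex.I) - (l : ℂ) = (t : ℂ) * Complex.I := by ring
  refine ⟨?_, ?_, ?_⟩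
  · rw [h1, h2, sub_self, abs_zero]; exact ht.le
  · rw [h2]; exact ht
  · rw [h3]; simp [abs_of_pos ht]

/-- If the cone limit is `v`, then `f` along vertical points tends to `v`. -/
lemma coneLimit_tendsto {f : ℂ → E} {l : ℝ} {v : E} (h : ConeLimit f l v)
    {r : ℕ → ℝ} (hr : ∀ n, 0 < r n) (hr0 : Filter.Tendsto r Filter.atTop (𝓝 0)) :
    Filter.Tendsto (fun n => f ((l : ℂ) + (r n : ℂ) * Complex.I)) Filter.atTop (𝓝 v) := by
  rw [Metric.tendsto_atTop]
  intro ε hε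
  obtain ⟨ρ, hρ, hρ'⟩ := h ε hε
  obtain ⟨N, hN⟩ := Filter.eventually_atTop.1 (hr0.eventually_lt_const hρ)
  refine ⟨N, fun n hn => ?_⟩
  obtain ⟨hc1, hc2, hc3⟩ := conePoint_facts l (hr n)
  rw [dist_eq_norm]
  exact hρ' _ hc1 hc2 (by rw [hc3]; exact hN n hn)

/-- Membership in all the `coneSet`s with shrinking radii implies that the cone limit exists. -/
lemma cone_exists_limit [CompleteSpace E] {f : ℂ → E} {l : ℝ} {r : ℕ → ℝ}
    (hr : ∀ n, 0 < r n) (hra : Antitone r)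
    (h : ∀ n : ℕ, l ∈ coneSet f (1 / (n + 1)) (r n)) : ∃ v, ConeLimit f l v := by
  set p : ℕ → ℂ := fun n => (l : ℂ) + (r n : ℂ) * Complex.I with hp
  have hfact : ∀ n, |(p n).re - l| ≤ (p n).im ∧ 0 < (p n).im ∧
      ‖p n - (l : ℂ)‖ = r n := fun n => conePoint_facts l (hr n)
  have hcone : ∀ N n : ℕ, N ≤ n → |(p n).re - l| ≤ (p n).im ∧ 0 < (p n).im ∧
      ‖p n - (l : ℂ)‖ ≤ r N := by
    intro N n hn
    exact ⟨(hfact n).1, (hfact n).2.1, by rw [(hfact n).2.2]; exact hra hn⟩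
  have hcauchy : CauchySeq (fun n => f (p n)) := by
    rw [Metric.cauchySeq_iff']
    intro ε hε
    obtain ⟨N, hN⟩ := exists_nat_one_div_lt hε
    refine ⟨N, fun n hn => ?_⟩
    rw [dist_eq_norm]
    obtain ⟨ha1, ha2, ha3⟩ := hcone N n hn
    obtain ⟨hb1, hb2, hb3⟩ := hcone N N le_rfl
    exact lt_of_le_of_lt (h N (p n) (p N) ha1 ha2 ha3 hb1 hb2 hb3) hN
  obtain ⟨v, hv⟩ := cauchySeq_tendsto_of_complete hcauchy
  refine ⟨v, fun ε hε => ?_⟩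
  obtain ⟨N, hN⟩ := exists_nat_one_div_lt hε
  refine ⟨r N, hr N, fun z hz1 hz2 hz3 => ?_⟩
  have hev : ∀ᶠ n in Filter.atTop, |(p n).re - l| ≤ (p n).im ∧ 0 < (p n).im ∧
      ‖p n - (l : ℂ)‖ ≤ r N :=
    Filter.eventually_atTop.2 ⟨N, fun n hn => hcone N n hn⟩
  exact lt_of_le_of_lt (coneSet_norm_le (h N) hev hv hz1 hz2 hz3.le) hN

end Aux2


/-- Cone-limit Egorov theorem, uniform version. -/
theorem cone_egorov_uniform
    {E : Type*} [NormedAddCommGroup E] [NormedSpace ℝ E] [CompleteSpace E]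
    (f : ℂ → E) (hf : ContinuousOn f {z : ℂ | 0 < z.im})
    (g : ℝ → E)
    (hg : ∀ l ∈ {l : ℝ | ∃ v : E, ConeLimit f l v}, ConeLimit f l (g l))
    (a b : ℝ) (hab : a < b)
    (hI : volume (Set.Ioo a b \ {l : ℝ | ∃ v : E, ConeLimit f l v}) = 0)
    (δ : ℝ) (hδ : 0 < δ) :
    ∃ K : Set ℝ, IsCompact K ∧ K ⊆ Set.Ioo a b ∩ {l : ℝ | ∃ v : E, ConeLimit f l v} ∧
      volume (Set.Ioo a b \ K) < ENNReal.ofReal δ ∧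
      ∀ ε > 0, ∃ r > 0, ∀ l ∈ K, ∀ z : ℂ, |z.re - l| ≤ z.im → 0 < z.im →
        ‖z - (l : ℂ)‖ < r → ‖f z - g l‖ < ε := by
  -- Step 1: for each `n`, find a radius such that the bad set has small measure.
  have key : ∀ n : ℕ, ∃ m : ℕ,
      volume (Set.Ioo a b \ coneSet f (1 / (n + 1)) (1 / (m + 1)))
        < ENNReal.ofReal (δ / 4 * (1 / 2) ^ n) := by
    intro n
    set s : ℕ → Set ℝ := fun m => Set.Ioo a b \ coneSet f (1 / (n + 1)) (1 / (m + 1)) with hs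
    have hsm : ∀ m, NullMeasurableSet (s m) volume := fun m =>
      (measurableSet_Ioo.diff (coneSet_closed f hf _ _).measurableSet).nullMeasurableSet
    have hanti : Antitone s := by
      intro m k hmk
      refine Set.diff_subset_diff_right (coneSet_mono ?_)
      apply one_div_le_one_div_of_le (by positivity)
      have : (m : ℝ) ≤ (k : ℝ) := Nat.cast_le.2 hmk
      linarith
    have hfin : ∃ m, volume (s m) ≠ ⊤ := by
      refine ⟨0, ne_of_lt (lt_of_le_of_lt (measure_mono Set.diff_subset) ?_)⟩
      rw [Real.volume_Ioo]; exact ENNReal.ofReal_lt_top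
    have hinter : volume (⋂ m, s m) = 0 := by
      refine measure_mono_null ?_ hI
      intro x hx
      rw [Set.mem_iInter] at hx
      refine ⟨(hx 0).1, fun hxΛ => ?_⟩
      obtain ⟨v, hv⟩ := hxΛ
      obtain ⟨m, hm⟩ := coneSet_of_coneLimit hv (show (0:ℝ) < 1 / (n + 1) by positivity)
      exact (hx m).2 hm
    have htend := tendsto_measure_iInter_atTop hsm hanti hfin
    rw [hinter] at htend
    have hpos : (0 : ENNReal) < ENNReal.ofReal (δ / 4 * (1 / 2) ^ n) :=
      ENNReal.ofReal_pos.2 (by positivity)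
    exact (htend.eventually_lt_const hpos).exists
  choose m' hm' using key
  -- Step 2: a monotone sequence of radii.
  set r : ℕ → ℝ := fun n => 1 / (((n + (Finset.range (n + 1)).sup m' : ℕ) : ℝ) + 1) with hrdef
  have hrpos : ∀ n, 0 < r n := fun n => by positivity
  have hrmono : Antitone r := by
    intro n k hnk
    apply one_div_le_one_div_of_le (by positivity)
    have hle : (n + (Finset.range (n + 1)).sup m' : ℕ) ≤ (k + (Finset.range (k + 1)).sup m' : ℕ) :=
      add_le_add hnk (Finset.sup_mono (Finset.range_subset_range.2 (by omega)))
    have := Nat.cast_le (α := ℝ) |>.2 hle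
    linarith
  have hrle : ∀ n, r n ≤ 1 / ((m' n : ℝ) + 1) := by
    intro n
    apply one_div_le_one_div_of_le (by positivity)
    have hle : m' n ≤ (n + (Finset.range (n + 1)).sup m' : ℕ) :=
      le_add_of_le_right (Finset.le_sup (Finset.self_mem_range_succ n))
    have := Nat.cast_le (α := ℝ) |>.2 hle
    linarith
  have hrle2 : ∀ n, r n ≤ 1 / ((n : ℝ) + 1) := by
    intro n
    apply one_div_le_one_div_of_le (by positivity)
    have hle : n ≤ (n + (Finset.range (n + 1)).sup m' : ℕ) := Nat.le_add_right _ _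
    have := Nat.cast_le (α := ℝ) |>.2 hle
    linarith
  have hr0 : Filter.Tendsto r Filter.atTop (𝓝 0) :=
    squeeze_zero (fun n => (hrpos n).le) hrle2 tendsto_one_div_add_atTop_nhds_zero_nat
  have hvol : ∀ n : ℕ, volume (Set.Ioo a b \ coneSet f (1 / ((n : ℝ) + 1)) (r n))
      < ENNReal.ofReal (δ / 4 * (1 / 2) ^ n) := fun n =>
    lt_of_le_of_lt (measure_mono (Set.diff_subset_diff_right (coneSet_mono (hrle n)))) (hm' n)
  -- Step 3: define `K`.
  set η := δ / 8 with hη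
  have hηpos : 0 < η := by positivity
  set K := Set.Icc (a + η) (b - η) ∩ ⋂ n : ℕ, coneSet f (1 / ((n : ℝ) + 1)) (r n) with hK
  have hKclosed : IsClosed K :=
    isClosed_Icc.inter (isClosed_iInter fun n => coneSet_closed f hf _ _)
  have hKcomp : IsCompact K := isCompact_Icc.of_isClosed_subset hKclosed Set.inter_subset_left
  have hKsub : K ⊆ Set.Ioo a b ∩ {l : ℝ | ∃ v : E, ConeLimit f l v} := by
    intro x hx
    have hIcc := hx.1
    have hco : ∀ n : ℕ, x ∈ coneSet f (1 / ((n : ℝ) + 1)) (r n) := fun n => Set.mem_iInter.1 hx.2 n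
    refine ⟨⟨by linarith [hIcc.1], by linarith [hIcc.2]⟩, cone_exists_limit hrpos hrmono hco⟩
  refine ⟨K, hKcomp, hKsub, ?_, ?_⟩
  · -- measure estimate
    have hdiff : Set.Ioo a b \ K ⊆ (Set.Ico a (a + η) ∪ Set.Ioc (b - η) b) ∪
        ⋃ n : ℕ, (Set.Ioo a b \ coneSet f (1 / ((n : ℝ) + 1)) (r n)) := by
      intro x hx
      obtain ⟨hxI, hxK⟩ := hx
      by_cases h1 : x ∈ Set.Icc (a + η) (b - η)
      · have h2 : x ∉ ⋂ n : ℕ, coneSet f (1 / ((n : ℝ) + 1)) (r n) := fun h => hxK ⟨h1, h⟩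
        rw [Set.mem_iInter] at h2
        push_neg at h2
        obtain ⟨n, hn⟩ := h2
        exact Or.inr (Set.mem_iUnion.2 ⟨n, hxI, hn⟩)
      · rw [Set.mem_Icc, not_and_or, not_le, not_le] at h1
        rcases h1 with h1 | h1
        · exact Or.inl (Or.inl ⟨hxI.1.le, h1⟩)
        · exact Or.inl (Or.inr ⟨h1, hxI.2.le⟩)
    have hvol1 : volume (Set.Ico a (a + η) ∪ Set.Ioc (b - η) b) ≤ ENNReal.ofReal (δ / 4) := by
      refine le_trans (measure_union_le _ _) ?_
      rw [Real.volume_Ico, Real.volume_Ioc]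
      rw [show a + η - a = η by ring, show b - (b - η) = η by ring,
        ← ENNReal.ofReal_add hηpos.le hηpos.le]
      exact ENNReal.ofReal_le_ofReal (by rw [hη]; linarith)
    have hvol2 : volume (⋃ n : ℕ, (Set.Ioo a b \ coneSet f (1 / ((n : ℝ) + 1)) (r n)))
        ≤ ENNReal.ofReal (δ / 2) := by
      refine le_trans (measure_iUnion_le _) ?_
      refine le_trans (ENNReal.tsum_le_tsum fun n => (hvol n).le) ?_
      rw [← ENNReal.ofReal_tsum_of_nonneg (fun n => by positivity)
        ((summable_geometric_two).mul_left _)]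
      apply ENNReal.ofReal_le_ofReal
      rw [tsum_mul_left, tsum_geometric_two]
      linarith
    calc volume (Set.Ioo a b \ K)
        ≤ volume ((Set.Ico a (a + η) ∪ Set.Ioc (b - η) b) ∪
            ⋃ n : ℕ, (Set.Ioo a b \ coneSet f (1 / ((n : ℝ) + 1)) (r n))) := measure_mono hdiff
      _ ≤ volume (Set.Ico a (a + η) ∪ Set.Ioc (b - η) b) +
            volume (⋃ n : ℕ, (Set.Ioo a b \ coneSet f (1 / ((n : ℝ) + 1)) (r n))) := measure_union_le _ _
      _ ≤ ENNReal.ofReal (δ / 4) + ENNReal.ofReal (δ / 2) := add_le_add hvol1 hvol2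
      _ = ENNReal.ofReal (δ / 4 + δ / 2) := (ENNReal.ofReal_add (by positivity) (by positivity)).symm
      _ < ENNReal.ofReal δ := (ENNReal.ofReal_lt_ofReal_iff hδ).2 (by linarith)
  · -- uniformity
    intro ε hε
    obtain ⟨N, hN⟩ := exists_nat_one_div_lt hε
    refine ⟨r N, hrpos N, fun l hl z hz1 hz2 hz3 => ?_⟩
    have hco : l ∈ coneSet f (1 / ((N : ℝ) + 1)) (r N) := Set.mem_iInter.1 hl.2 N
    have hgl := hg l (hKsub hl).2
    have hptend := coneLimit_tendsto hgl hrpos hr0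
    have hev : ∀ᶠ n in Filter.atTop, |((l : ℂ) + (r n : ℂ) * Complex.I).re - l| ≤
        ((l : ℂ) + (r n : ℂ) * Complex.I).im ∧ 0 < ((l : ℂ) + (r n : ℂ) * Complex.I).im ∧
        ‖((l : ℂ) + (r n : ℂ) * Complex.I) - (l : ℂ)‖ ≤ r N := by
      refine Filter.eventually_atTop.2 ⟨N, fun n hn => ?_⟩
      obtain ⟨h1, h2, h3⟩ := conePoint_facts l (hrpos n)
      exact ⟨h1, h2, by rw [h3]; exact hrmono hn⟩
    exact lt_of_le_of_lt (coneSet_norm_le hco hev hptend hz1 hz2 hz3.le) hN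
end

section
/- (Continuity of the glued boundary extension, ε/3-step.) Let E be a complete normed space, K a compact subset of ℝ, f an E-valued function defined and continuous on the open upper half-plane ℂ₊, and g : K → E. Assume the following uniform cone-convergence condition: for every ε > 0 there exists r > 0 such that for all λ ∈ K and all z ∈ Θ(λ) ∩ ℂ₊ with |z − λ| < r one has ‖f(z) − g(λ)‖ < ε. Then the function h defined on Θ(K) = ⋃_{λ∈K} Θ(λ) by h(z) = f(z) for z ∈ Θ(K) ∩ ℂ₊ and h(λ) = g(λ) for λ ∈ K is continuous on Θ(K) (with respect to the subspace topology of ℂ). -/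
/-- For `A ⊆ ℝ`, `Θ(A) = ⋃ λ ∈ A, Θ(λ)`. -/
def coneThetaSet (A : Set ℝ) : Set ℂ := ⋃ l ∈ A, coneTheta l

/-- Continuity of the glued boundary extension (the ε/3-step): if `f` is continuous on
`ℂ₊`, `K ⊆ ℝ` is compact and the cone-convergence of `f` to `g` is uniform over `K`,
then the function equal to `f` on `Θ(K) ∩ ℂ₊` and to `g` on `K` is continuous on `Θ(K)`. -/
theorem glued_boundary_extension_continuous
    {E : Type*} [NormedAddCommGroup E] [NormedSpace ℝ E] [CompleteSpace E]
    (K : Set ℝ) (hK : IsCompact K)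
    (f : ℂ → E) (hf : ContinuousOn f {z : ℂ | 0 < z.im})
    (g : ℝ → E)
    (hunif : ∀ ε > 0, ∃ r > 0, ∀ l ∈ K, ∀ z : ℂ, |z.re - l| ≤ z.im → 0 < z.im →
      ‖z - (l : ℂ)‖ < r → ‖f z - g l‖ < ε) :
    ContinuousOn (fun z : ℂ => if 0 < z.im then f z else g z.re)
      (coneThetaSet K) := by
  intro z hz
  obtain ⟨l, hl, hzl⟩ : ∃ l ∈ K, z ∈ coneTheta l := by
    simpa [coneThetaSet] using hz
  have himz : 0 ≤ z.im := le_trans (abs_nonneg _) hzl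
  rcases lt_or_eq_of_le himz with him | him
  · -- interior case: z.im > 0
    have hopen : IsOpen {w : ℂ | 0 < w.im} := isOpen_lt continuous_const Complex.continuous_im
    have hca : ContinuousAt f z := hf.continuousAt (hopen.mem_nhds him)
    have heq : (fun w : ℂ => if 0 < w.im then f w else g w.re) =ᶠ[nhds z] f := by
      filter_upwards [hopen.mem_nhds him] with w hw
      exact if_pos hw
    exact (hca.congr heq.symm).continuousWithinAt
  · -- boundary case: z.im = 0, so z.re = l
    have himz0 : z.im = 0 := him.symm
    have hzl' : |z.re - l| ≤ z.im := hzl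
    have hrel : z.re = l := by
      rw [himz0] at hzl'
      have := abs_nonpos_iff.mp hzl'
      linarith
    rw [Metric.continuousWithinAt_iff]
    intro ε hε
    obtain ⟨r, hr, hr'⟩ := hunif (ε/4) (by positivity)
    -- g values at nearby points of K are close
    have hg : ∀ μ ∈ K, ∀ ν ∈ K, |μ - ν| < r → ‖g μ - g ν‖ ≤ ε/2 := by
      intro μ hμ ν hν hd
      rcases eq_or_ne μ ν with rfl | hne
      · simp; positivity
      · set t := |μ - ν| / 2 with ht
        have ht0 : 0 < t := by
          have : 0 < |μ - ν| := abs_pos.mpr (sub_ne_zero.mpr hne)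
          positivity
        set v : ℂ := ⟨(μ + ν)/2, t⟩ with hv
        have hvre : v.re = (μ + ν)/2 := rfl
        have hvim : v.im = t := rfl
        have hconeμ : |v.re - μ| ≤ v.im := by
          rw [hvre, hvim, ht]
          rw [show (μ + ν)/2 - μ = (ν - μ)/2 by ring, abs_div, abs_sub_comm]
          simp
        have hconeν : |v.re - ν| ≤ v.im := by
          rw [hvre, hvim, ht]
          rw [show (μ + ν)/2 - ν = (μ - ν)/2 by ring, abs_div]
          simp
        have habsμ : ‖v - (μ : ℂ)‖ < r := by
          calc ‖v - (μ : ℂ)‖ ≤ |(v - (μ:ℂ)).re| + |(v - (μ:ℂ)).im| :=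
                Complex.norm_le_abs_re_add_abs_im _
            _ = |v.re - μ| + |v.im| := by simp
            _ ≤ t + t := by
                rw [hvim, abs_of_pos ht0]
                exact add_le_add (by simpa [hvim] using hconeμ) le_rfl
            _ = |μ - ν| := by rw [ht]; ring
            _ < r := hd
        have habsν : ‖v - (ν : ℂ)‖ < r := by
          calc ‖v - (ν : ℂ)‖ ≤ |(v - (ν:ℂ)).re| + |(v - (ν:ℂ)).im| :=
                Complex.norm_le_abs_re_add_abs_im _
            _ = |v.re - ν| + |v.im| := by simp
            _ ≤ t + t := by
                rw [hvim, abs_of_pos ht0]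
                exact add_le_add (by simpa [hvim] using hconeν) le_rfl
            _ = |μ - ν| := by rw [ht]; ring
            _ < r := hd
        have h1 : ‖f v - g μ‖ < ε/4 := hr' μ hμ v hconeμ (by rw [hvim]; exact ht0) habsμ
        have h2 : ‖f v - g ν‖ < ε/4 := hr' ν hν v hconeν (by rw [hvim]; exact ht0) habsν
        have key : g μ - g ν = (f v - g ν) - (f v - g μ) := by abel
        calc ‖g μ - g ν‖ = ‖(f v - g ν) - (f v - g μ)‖ := by rw [key]
          _ ≤ ‖f v - g ν‖ + ‖f v - g μ‖ := norm_sub_le _ _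
          _ ≤ ε/4 + ε/4 := by linarith
          _ = ε/2 := by ring
    refine ⟨r/3, by positivity, ?_⟩
    intro w hw hwz
    obtain ⟨μ, hμ, hwμ⟩ : ∃ μ ∈ K, w ∈ coneTheta μ := by
      simpa [coneThetaSet] using hw
    have hwμ' : |w.re - μ| ≤ w.im := hwμ
    have hdist : ‖w - z‖ < r/3 := by
      rw [Complex.dist_eq] at hwz; exact hwz
    have hre : |w.re - l| ≤ ‖w - z‖ := by
      have := Complex.abs_re_le_norm (w - z)
      simpa [hrel] using this
    have him' : w.im ≤ ‖w - z‖ := by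
      have := Complex.abs_im_le_norm (w - z)
      rw [Complex.sub_im, himz0, sub_zero] at this
      exact le_trans (le_abs_self _) this
    have hwim : 0 ≤ w.im := le_trans (abs_nonneg _) hwμ'
    have hμl : |μ - l| < 2*r/3 := by
      have h1 : |μ - w.re| ≤ w.im := by rwa [abs_sub_comm] at hwμ'
      calc |μ - l| ≤ |μ - w.re| + |w.re - l| := abs_sub_le _ _ _
        _ ≤ w.im + |w.re - l| := add_le_add h1 le_rfl
        _ < r/3 + r/3 := add_lt_add (lt_of_le_of_lt him' hdist) (lt_of_le_of_lt hre hdist)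
        _ = 2*r/3 := by ring
    have hgμl : ‖g μ - g l‖ ≤ ε/2 := hg μ hμ l hl (by linarith)
    have hFz : (if 0 < z.im then f z else g z.re) = g l := by
      rw [if_neg (by rw [himz0]; exact lt_irrefl 0), hrel]
    rcases lt_or_eq_of_le hwim with hwim' | hwim'
    · -- w.im > 0
      have hwμabs : ‖w - (μ : ℂ)‖ < r := by
        have hsub : ‖w - (μ:ℂ)‖ ≤ ‖w - z‖ + ‖z - (μ:ℂ)‖ := by
          simpa using norm_sub_le_norm_sub_add_norm_sub w z (μ : ℂ)
        have hzμ : ‖z - (μ:ℂ)‖ = |l - μ| := by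
          have : z - (μ:ℂ) = ((l - μ : ℝ) : ℂ) := by
            apply Complex.ext <;> simp [hrel, himz0]
          rw [this, Complex.norm_real, Real.norm_eq_abs]
        rw [hzμ, abs_sub_comm] at hsub
        calc ‖w - (μ:ℂ)‖ ≤ ‖w - z‖ + |μ - l| := hsub
          _ < r/3 + 2*r/3 := add_lt_add hdist hμl
          _ = r := by ring
      have hfw : ‖f w - g μ‖ < ε/4 := hr' μ hμ w hwμ' hwim' hwμabs
      have hFw : (if 0 < w.im then f w else g w.re) = f w := if_pos hwim'
      rw [dist_eq_norm, hFw, hFz]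
      calc ‖f w - g l‖ = ‖(f w - g μ) + (g μ - g l)‖ := by rw [sub_add_sub_cancel]
        _ ≤ ‖f w - g μ‖ + ‖g μ - g l‖ := norm_add_le _ _
        _ < ε/4 + ε/2 := add_lt_add_of_lt_of_le hfw hgμl
        _ < ε := by linarith
    · -- w.im = 0, so w.re = μ
      have hwim0 : w.im = 0 := hwim'.symm
      have hwre : w.re = μ := by
        rw [hwim0] at hwμ'
        have := abs_nonpos_iff.mp hwμ'
        linarith
      have hFw : (if 0 < w.im then f w else g w.re) = g μ := by
        rw [if_neg (by rw [hwim0]; exact lt_irrefl 0), hwre]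
      rw [dist_eq_norm, hFw, hFz]
      calc ‖g μ - g l‖ ≤ ε/2 := hgμl
        _ < ε := by linarith
end
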